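/- The maximum generalized sliced Wasserstein distance with an injective generalized Radon transform is a metric (the paper's Proposition): if for all Borel probability measures μ, ν on ℝ^d, g(·,θ)_#μ = g(·,θ)_#ν for every θ ∈ Ω_θ implies μ = ν, then max-GSW_p is a metric on the set of Borel probability measures on ℝ^d with finite p-th moment under every slice: it is non-negative, symmetric, satisfies the triangle inequality, and max-GSW_p(μ,ν) = 0 if and only if μ = ν. -/

import Mathlib

/-
`W_p` is symmetric because couplings can be swapped, vanishes on the diagonal coupling, and
satisfies the triangle inequality because two couplings with a common marginal glue to a
measure on three factors, on which Minkowski's inequality applies.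
It also separates probability measures: by Markov's inequality, a coupling of small cost moves
little mass by more than `ε`, so `W_p(μ, ν) = 0` forces the Lévy–Prokhorov distance to vanish.
All of this passes to the supremum over the slices, and `max-GSW_p(μ, ν) = 0` makes every slice
of `μ` and `ν` agree, whence `μ = ν` by injectivity of the generalized Radon transform.
-/

open MeasureTheory ENNReal

/-- The `p`-Wasserstein distance between two measures, defined as the infimum over all
couplings (probability measures on the product whose marginals are `μ` and `ν`) of
`(∫ d(x,y)^p dγ)^(1/p)`. -/
noncomputable def wassersteinDist {X : Type*} [MeasurableSpace X] [PseudoMetricSpace X]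
    (p : ℝ) (μ ν : Measure X) : ℝ≥0∞ :=
  (⨅ γ ∈ {γ : Measure (X × X) | IsProbabilityMeasure γ ∧
      γ.map Prod.fst = μ ∧ γ.map Prod.snd = ν},
    ∫⁻ q, ENNReal.ofReal (dist q.1 q.2 ^ p) ∂γ) ^ (1 / p)

/-- The maximum generalized sliced `p`-Wasserstein distance associated with the defining
function `g`: the supremum over the parameter space of the `p`-Wasserstein distance between
the slices. -/
noncomputable def maxGSW {d : ℕ} {Θ : Type*} (p : ℝ)
    (g : (Fin d → ℝ) → Θ → ℝ) (μ ν : Measure (Fin d → ℝ)) : ℝ≥0∞ :=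
  ⨆ θ : Θ, wassersteinDist p (μ.map fun x => g x θ) (ν.map fun x => g x θ)

open ProbabilityTheory

section Coupling

variable {X : Type*} [MeasurableSpace X]

def couplings (μ ν : Measure X) : Set (Measure (X × X)) :=
  {γ | IsProbabilityMeasure γ ∧ γ.map Prod.fst = μ ∧ γ.map Prod.snd = ν}

lemma diagonal_mem_couplings (μ : Measure X) [IsProbabilityMeasure μ] :
    μ.map (fun x => (x, x)) ∈ couplings μ μ := by
  have hdiag : Measurable fun x : X => (x, x) := measurable_id.prodMk measurable_id
  refine ⟨Measure.isProbabilityMeasure_map hdiag.aemeasurable, ?_, ?_⟩ <;>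
    rw [Measure.map_map (by fun_prop) hdiag] <;> exact Measure.map_id

lemma map_swap_mem_couplings {μ ν : Measure X} {γ : Measure (X × X)} (hγ : γ ∈ couplings μ ν) :
    γ.map Prod.swap ∈ couplings ν μ := by
  obtain ⟨_, hfst, hsnd⟩ := hγ
  exact ⟨Measure.isProbabilityMeasure_map measurable_swap.aemeasurable,
    by rwa [Measure.map_map measurable_fst measurable_swap],
    by rwa [Measure.map_map measurable_snd measurable_swap]⟩

end Coupling

section Cost

variable {X : Type*} [MeasurableSpace X] [PseudoMetricSpace X]

noncomputable def transportCost (p : ℝ) (γ : Measure (X × X)) : ℝ≥0∞ :=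
  ∫⁻ q, ENNReal.ofReal (dist q.1 q.2 ^ p) ∂γ

lemma wassersteinDist_def (p : ℝ) (μ ν : Measure X) :
    wassersteinDist p μ ν = (⨅ γ ∈ couplings μ ν, transportCost p γ) ^ (1 / p) := rfl

lemma wassersteinDist_eq_iInf_rpow {p : ℝ} (hp : 0 < p) (μ ν : Measure X) :
    wassersteinDist p μ ν = ⨅ γ ∈ couplings μ ν, transportCost p γ ^ (1 / p) := by
  let e := orderIsoRpow (1 / p) (by positivity)
  exact (e.map_iInf _).trans (iInf_congr fun γ => e.map_iInf _)

lemma transportCost_map_swap (p : ℝ) (γ : Measure (X × X)) :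
    transportCost p (γ.map Prod.swap) = transportCost p γ := by
  refine (lintegral_map_equiv _ MeasurableEquiv.prodComm).trans (lintegral_congr fun q => ?_)
  rw [dist_comm]
  rfl

lemma transportCost_map_diagonal {p : ℝ} (hp : p ≠ 0) (μ : Measure X) :
    transportCost p (μ.map fun x => (x, x)) = 0 := by
  refine le_antisymm ((lintegral_map_le _ _).trans ?_) zero_le
  simp [Real.zero_rpow hp]

lemma wassersteinDist_self {p : ℝ} (hp : 0 < p) (μ : Measure X) [IsProbabilityMeasure μ] :
    wassersteinDist p μ μ = 0 := by
  rw [wassersteinDist_def, nonpos_iff_eq_zero.1 ((iInf₂_le _ (diagonal_mem_couplings μ)).trans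
    (transportCost_map_diagonal hp.ne' μ).le), zero_rpow_of_pos (by positivity)]

lemma wassersteinDist_comm (p : ℝ) (μ ν : Measure X) :
    wassersteinDist p μ ν = wassersteinDist p ν μ := by
  suffices h : ∀ μ ν : Measure X,
      ⨅ γ ∈ couplings ν μ, transportCost p γ ≤ ⨅ γ ∈ couplings μ ν, transportCost p γ by
    rw [wassersteinDist_def, wassersteinDist_def, (h μ ν).antisymm (h ν μ)]
  intro μ ν
  exact le_iInf₂ fun γ hγ => (iInf₂_le _ (map_swap_mem_couplings hγ)).trans_eq
    (transportCost_map_swap p γ)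

end Cost

section Separation

variable {X : Type*} [MeasurableSpace X] [PseudoMetricSpace X]

lemma measure_le_measure_thickening_add {μ ν : Measure X} {γ : Measure (X × X)}
    (hγ : γ ∈ couplings μ ν) {B : Set X} (hB : MeasurableSet B) (ε : ℝ) :
    μ B ≤ ν (Metric.thickening ε B) + γ {q | ε ≤ dist q.1 q.2} := by
  obtain ⟨-, rfl, rfl⟩ := hγ
  have hsub : Prod.fst ⁻¹' B ⊆
      Prod.snd ⁻¹' Metric.thickening ε B ∪ {q : X × X | ε ≤ dist q.1 q.2} := by
    intro q hq
    by_cases hd : ε ≤ dist q.1 q.2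
    · exact Or.inr hd
    · exact Or.inl (Metric.mem_thickening_iff.2 ⟨q.1, hq, by rw [dist_comm]; exact not_le.1 hd⟩)
  calc γ.map Prod.fst B = γ (Prod.fst ⁻¹' B) := Measure.map_apply measurable_fst hB
    _ ≤ γ (Prod.snd ⁻¹' Metric.thickening ε B) + γ {q | ε ≤ dist q.1 q.2} :=
      (measure_mono hsub).trans (measure_union_le _ _)
    _ ≤ γ.map Prod.snd (Metric.thickening ε B) + γ {q | ε ≤ dist q.1 q.2} := by
      gcongr
      exact Measure.le_map_apply measurable_snd.aemeasurable _

variable [SecondCountableTopology X]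

lemma mul_measure_le_transportCost [OpensMeasurableSpace X] {p : ℝ} (hp : 0 ≤ p)
    (γ : Measure (X × X)) {ε : ℝ} (hε : 0 ≤ ε) :
    ENNReal.ofReal (ε ^ p) * γ {q | ε ≤ dist q.1 q.2} ≤ transportCost p γ :=
  calc ENNReal.ofReal (ε ^ p) * γ {q | ε ≤ dist q.1 q.2}
      ≤ ENNReal.ofReal (ε ^ p) *
          γ {q | ENNReal.ofReal (ε ^ p) ≤ ENNReal.ofReal (dist q.1 q.2 ^ p)} := by
        gcongr
        exact fun hq => ENNReal.ofReal_le_ofReal (Real.rpow_le_rpow hε hq hp)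
    _ ≤ transportCost p γ :=
        mul_meas_ge_le_lintegral₀ (measurable_dist.pow_const p).ennreal_ofReal.aemeasurable _

lemma levyProkhorovEDist_eq_zero_of_wassersteinDist_eq_zero [OpensMeasurableSpace X] {p : ℝ}
    (hp : 0 < p) {μ ν : Measure X} [IsProbabilityMeasure μ] [IsProbabilityMeasure ν]
    (h : wassersteinDist p μ ν = 0) : levyProkhorovEDist μ ν = 0 := by
  have hcost : ⨅ γ ∈ couplings μ ν, transportCost p γ = 0 := by
    rw [wassersteinDist_def, ENNReal.rpow_eq_zero_iff] at h
    rcases h with ⟨h, -⟩ | ⟨-, h⟩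
    · exact h
    · exact absurd h (not_lt.2 (by positivity))
  refine le_antisymm (levyProkhorovEDist_le_of_forall_le μ ν 0 fun ε B hε hεtop hB => ?_) zero_le
  have hr : 0 < ε.toReal := toReal_pos hε.ne' hεtop.ne
  have hc : ENNReal.ofReal (ε.toReal ^ p) ≠ 0 := (ofReal_pos.2 (Real.rpow_pos_of_pos hr p)).ne'
  obtain ⟨γ, hγ, hlt⟩ :
      ∃ γ ∈ couplings μ ν, transportCost p γ < ENNReal.ofReal (ε.toReal ^ p) * ε := by
    have : ⨅ γ ∈ couplings μ ν, transportCost p γ < ENNReal.ofReal (ε.toReal ^ p) * ε :=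
      hcost ▸ pos_iff_ne_zero.2 (mul_ne_zero hc hε.ne')
    simpa only [iInf_lt_iff, exists_prop] using this
  have hsmall : γ {q | ε.toReal ≤ dist q.1 q.2} ≤ ε :=
    ((ENNReal.mul_lt_mul_iff_right hc ofReal_ne_top).1
      ((mul_measure_le_transportCost hp.le γ hr.le).trans_lt hlt)).le
  exact (measure_le_measure_thickening_add hγ hB _).trans (add_le_add_right hsmall _)

lemma eq_of_wassersteinDist_eq_zero [BorelSpace X] {p : ℝ} (hp : 0 < p)
    {μ ν : Measure X} [IsProbabilityMeasure μ] [IsProbabilityMeasure ν]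
    (h : wassersteinDist p μ ν = 0) : μ = ν := by
  have hLP := levyProkhorovEDist_eq_zero_of_wassersteinDist_eq_zero hp h
  have : LevyProkhorov.ofMeasure (α := ProbabilityMeasure X) ⟨μ, ‹_›⟩ = .ofMeasure ⟨ν, ‹_›⟩ :=
    eq_of_dist_eq_zero (by simp [LevyProkhorov.dist_probabilityMeasure_def, levyProkhorovDist, hLP])
  exact congrArg (fun P => (P.toMeasure : Measure X)) this

end Separation

section Gluing

variable {X Y Z : Type*} [MeasurableSpace X] [MeasurableSpace Y] [MeasurableSpace Z]

lemma compProd_prod_map_fst (μ : Measure X) [SFinite μ] (κ : Kernel X Y) [IsSFiniteKernel κ]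
    (η : Kernel X Z) [IsMarkovKernel η] :
    (μ ⊗ₘ (κ ×ₖ η)).map (Prod.map id Prod.fst) = μ ⊗ₘ κ := by
  rw [← Measure.compProd_map measurable_fst, ← Kernel.fst_eq, Kernel.fst_prod]

lemma compProd_prod_map_snd (μ : Measure X) [SFinite μ] (κ : Kernel X Y) [IsMarkovKernel κ]
    (η : Kernel X Z) [IsSFiniteKernel η] :
    (μ ⊗ₘ (κ ×ₖ η)).map (Prod.map id Prod.snd) = μ ⊗ₘ η := by
  rw [← Measure.compProd_map measurable_snd, ← Kernel.snd_eq, Kernel.snd_prod]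

lemma exists_gluing [StandardBorelSpace X] [Nonempty X] [StandardBorelSpace Z] [Nonempty Z]
    (γ₁ : Measure (X × Y)) (γ₂ : Measure (Y × Z)) [IsProbabilityMeasure γ₁] [IsFiniteMeasure γ₂]
    (h : γ₁.snd = γ₂.fst) :
    ∃ π : Measure (X × Y × Z), IsProbabilityMeasure π ∧
      π.map (fun q => (q.1, q.2.1)) = γ₁ ∧ π.map Prod.snd = γ₂ := by
  set ρ : Measure (Y × X) := γ₁.map Prod.swap
  have hρ : ρ.fst = γ₂.fst := by
    rw [← h, Measure.fst, Measure.map_map measurable_fst measurable_swap]; rfl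
  have : IsProbabilityMeasure γ₂.fst := h ▸ inferInstance
  have hperm : Measurable fun q : Y × X × Z => (q.2.1, q.1, q.2.2) := by fun_prop
  -- `X` and `Z` are drawn independently of each other given `Y`.
  refine ⟨(γ₂.fst ⊗ₘ (ρ.condKernel ×ₖ γ₂.condKernel)).map fun q => (q.2.1, q.1, q.2.2),
    Measure.isProbabilityMeasure_map hperm.aemeasurable, ?_, ?_⟩
  · rw [Measure.map_map (by fun_prop) hperm,
      show ((fun q : X × Y × Z => (q.1, q.2.1)) ∘ fun q : Y × X × Z => (q.2.1, q.1, q.2.2))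
        = Prod.swap ∘ Prod.map id Prod.fst from rfl,
      ← Measure.map_map measurable_swap (by fun_prop), compProd_prod_map_fst, ← hρ,
      ρ.disintegrate, Measure.map_map measurable_swap measurable_swap, Prod.swap_swap_eq,
      Measure.map_id]
  · rw [Measure.map_map measurable_snd hperm,
      show (Prod.snd ∘ fun q : Y × X × Z => (q.2.1, q.1, q.2.2)) = Prod.map id Prod.snd from rfl,
      compProd_prod_map_snd, γ₂.disintegrate]

end Gluing

section Triangle

variable {X : Type*} [MeasurableSpace X] [PseudoMetricSpace X]

lemma transportCost_eq_lintegral_edist_rpow {p : ℝ} (hp : 0 ≤ p) (γ : Measure (X × X)) :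
    transportCost p γ = ∫⁻ q, edist q.1 q.2 ^ p ∂γ := by
  simp_rw [transportCost, edist_dist, ENNReal.ofReal_rpow_of_nonneg dist_nonneg hp]

lemma wassersteinDist_le_transportCost_rpow {p : ℝ} (hp : 0 ≤ p) {μ ν : Measure X}
    {γ : Measure (X × X)} (hγ : γ ∈ couplings μ ν) :
    wassersteinDist p μ ν ≤ transportCost p γ ^ (1 / p) :=
  ENNReal.rpow_le_rpow (iInf₂_le _ hγ) (by positivity)

variable [OpensMeasurableSpace X] [SecondCountableTopology X]

lemma transportCost_map {Ω : Type*} [MeasurableSpace Ω] {p : ℝ} (hp : 0 ≤ p) (π : Measure Ω)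
    {φ : Ω → X × X} (hφ : Measurable φ) :
    transportCost p (π.map φ) = ∫⁻ ω, edist (φ ω).1 (φ ω).2 ^ p ∂π := by
  rw [transportCost_eq_lintegral_edist_rpow hp, lintegral_map (by fun_prop) hφ]

lemma lintegral_edist_rpow_triangle {Ω : Type*} [MeasurableSpace Ω] {p : ℝ} (hp : 1 ≤ p)
    (π : Measure Ω) {f g h : Ω → X} (hf : AEMeasurable f π) (hg : AEMeasurable g π)
    (hh : AEMeasurable h π) :
    (∫⁻ ω, edist (f ω) (h ω) ^ p ∂π) ^ (1 / p) ≤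
      (∫⁻ ω, edist (f ω) (g ω) ^ p ∂π) ^ (1 / p) + (∫⁻ ω, edist (g ω) (h ω) ^ p ∂π) ^ (1 / p) :=
  calc (∫⁻ ω, edist (f ω) (h ω) ^ p ∂π) ^ (1 / p)
      ≤ (∫⁻ ω, (edist (f ω) (g ω) + edist (g ω) (h ω)) ^ p ∂π) ^ (1 / p) := by
        gcongr with ω
        exact edist_triangle _ _ _
    _ ≤ _ := ENNReal.lintegral_Lp_add_le (hf.edist hg) (hg.edist hh) hp

lemma wassersteinDist_le_add_of_mem_couplings [StandardBorelSpace X] {p : ℝ} (hp : 1 ≤ p)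
    {μ₁ μ₂ μ₃ : Measure X} {γ₁₂ γ₂₃ : Measure (X × X)} (h₁₂ : γ₁₂ ∈ couplings μ₁ μ₂)
    (h₂₃ : γ₂₃ ∈ couplings μ₂ μ₃) :
    wassersteinDist p μ₁ μ₃ ≤ transportCost p γ₁₂ ^ (1 / p) + transportCost p γ₂₃ ^ (1 / p) := by
  obtain ⟨_, hfst₁₂, hsnd₁₂⟩ := h₁₂
  obtain ⟨_, hfst₂₃, hsnd₂₃⟩ := h₂₃
  have : Nonempty X := (nonempty_of_isProbabilityMeasure γ₁₂).map Prod.fst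
  obtain ⟨π, _, hπ₁₂, hπ₂₃⟩ := exists_gluing γ₁₂ γ₂₃ (hsnd₁₂.trans hfst₂₃.symm)
  have hp₀ : 0 ≤ p := by linarith
  have h₁₃ : π.map (fun q => (q.1, q.2.2)) ∈ couplings μ₁ μ₃ := by
    refine ⟨Measure.isProbabilityMeasure_map (by fun_prop), ?_, ?_⟩
    · rw [← hfst₁₂, ← hπ₁₂, Measure.map_map measurable_fst (by fun_prop),
        Measure.map_map measurable_fst (by fun_prop)]
      rfl
    · rw [← hsnd₂₃, ← hπ₂₃, Measure.map_map measurable_snd (by fun_prop),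
        Measure.map_map measurable_snd measurable_snd]
      rfl
  calc wassersteinDist p μ₁ μ₃
      ≤ (∫⁻ q, edist q.1 q.2.2 ^ p ∂π) ^ (1 / p) :=
        (wassersteinDist_le_transportCost_rpow hp₀ h₁₃).trans_eq
          (by rw [transportCost_map hp₀ π (by fun_prop)])
    _ ≤ (∫⁻ q, edist q.1 q.2.1 ^ p ∂π) ^ (1 / p) + (∫⁻ q, edist q.2.1 q.2.2 ^ p ∂π) ^ (1 / p) :=
        lintegral_edist_rpow_triangle hp π (by fun_prop) (by fun_prop) (by fun_prop)
    _ = transportCost p γ₁₂ ^ (1 / p) + transportCost p γ₂₃ ^ (1 / p) := by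
        rw [← hπ₁₂, ← hπ₂₃, transportCost_map hp₀ π (by fun_prop),
          transportCost_map hp₀ π measurable_snd]

lemma wassersteinDist_triangle [StandardBorelSpace X] {p : ℝ} (hp : 1 ≤ p)
    (μ₁ μ₂ μ₃ : Measure X) :
    wassersteinDist p μ₁ μ₃ ≤ wassersteinDist p μ₁ μ₂ + wassersteinDist p μ₂ μ₃ := by
  rw [wassersteinDist_eq_iInf_rpow (by linarith) μ₁ μ₂,
    wassersteinDist_eq_iInf_rpow (by linarith) μ₂ μ₃]
  exact ENNReal.le_iInf₂_add_iInf₂ fun _ h₁₂ _ h₂₃ =>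
    wassersteinDist_le_add_of_mem_couplings hp h₁₂ h₂₃

end Triangle

section MaxGSW

variable {d : ℕ} {Θ : Type*} {p : ℝ}

lemma wassersteinDist_le_maxGSW (g : (Fin d → ℝ) → Θ → ℝ) (μ ν : Measure (Fin d → ℝ)) (θ : Θ) :
    wassersteinDist p (μ.map fun x => g x θ) (ν.map fun x => g x θ) ≤ maxGSW p g μ ν :=
  le_iSup (fun θ => wassersteinDist p (μ.map fun x => g x θ) (ν.map fun x => g x θ)) θ

lemma maxGSW_comm (g : (Fin d → ℝ) → Θ → ℝ) (μ ν : Measure (Fin d → ℝ)) :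
    maxGSW p g μ ν = maxGSW p g ν μ :=
  iSup_congr fun _ => wassersteinDist_comm p _ _

lemma maxGSW_self (hp : 0 < p) {g : (Fin d → ℝ) → Θ → ℝ} (hg : ∀ θ, Measurable fun x => g x θ)
    (μ : Measure (Fin d → ℝ)) [IsProbabilityMeasure μ] : maxGSW p g μ μ = 0 :=
  ENNReal.iSup_eq_zero.2 fun θ =>
    have := Measure.isProbabilityMeasure_map (μ := μ) (hg θ).aemeasurable
    wassersteinDist_self hp _

lemma map_eq_of_maxGSW_eq_zero (hp : 0 < p) {g : (Fin d → ℝ) → Θ → ℝ}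
    (hg : ∀ θ, Measurable fun x => g x θ) {μ ν : Measure (Fin d → ℝ)} [IsProbabilityMeasure μ]
    [IsProbabilityMeasure ν] (h : maxGSW p g μ ν = 0) (θ : Θ) :
    μ.map (fun x => g x θ) = ν.map (fun x => g x θ) :=
  have := Measure.isProbabilityMeasure_map (μ := μ) (hg θ).aemeasurable
  have := Measure.isProbabilityMeasure_map (μ := ν) (hg θ).aemeasurable
  eq_of_wassersteinDist_eq_zero hp (ENNReal.iSup_eq_zero.1 h θ)

lemma maxGSW_triangle (hp : 1 ≤ p) (g : (Fin d → ℝ) → Θ → ℝ) (μ₁ μ₂ μ₃ : Measure (Fin d → ℝ)) :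
    maxGSW p g μ₁ μ₃ ≤ maxGSW p g μ₁ μ₂ + maxGSW p g μ₂ μ₃ :=
  iSup_le fun θ => (wassersteinDist_triangle hp _ (μ₂.map fun x => g x θ) _).trans <|
    add_le_add (wassersteinDist_le_maxGSW g μ₁ μ₂ θ) (wassersteinDist_le_maxGSW g μ₂ μ₃ θ)

end MaxGSW

theorem maxGSW_metric_general {d : ℕ} {Θ : Type*}
    (p : ℝ) (hp : 1 ≤ p)
    (g : (Fin d → ℝ) → Θ → ℝ) (hg : ∀ θ : Θ, Measurable fun x => g x θ)
    (hinj : ∀ μ ν : Measure (Fin d → ℝ), IsProbabilityMeasure μ → IsProbabilityMeasure ν →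
      (∀ θ : Θ, μ.map (fun x => g x θ) = ν.map (fun x => g x θ)) → μ = ν) :
    (∀ μ ν : Measure (Fin d → ℝ), IsProbabilityMeasure μ → IsProbabilityMeasure ν →
      (∀ θ : Θ, ∫⁻ x, ENNReal.ofReal (|g x θ| ^ p) ∂μ < ∞) →
      (∀ θ : Θ, ∫⁻ x, ENNReal.ofReal (|g x θ| ^ p) ∂ν < ∞) →
      0 ≤ maxGSW p g μ ν ∧ maxGSW p g μ ν = maxGSW p g ν μ ∧
        (maxGSW p g μ ν = 0 ↔ μ = ν)) ∧
    (∀ μ₁ μ₂ μ₃ : Measure (Fin d → ℝ),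
      IsProbabilityMeasure μ₁ → IsProbabilityMeasure μ₂ → IsProbabilityMeasure μ₃ →
      (∀ θ : Θ, ∫⁻ x, ENNReal.ofReal (|g x θ| ^ p) ∂μ₁ < ∞) →
      (∀ θ : Θ, ∫⁻ x, ENNReal.ofReal (|g x θ| ^ p) ∂μ₂ < ∞) →
      (∀ θ : Θ, ∫⁻ x, ENNReal.ofReal (|g x θ| ^ p) ∂μ₃ < ∞) →
      maxGSW p g μ₁ μ₃ ≤ maxGSW p g μ₁ μ₂ + maxGSW p g μ₂ μ₃) := by
  have hp₀ : 0 < p := by linarith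
  refine ⟨fun μ ν hμ hν _ _ => ⟨zero_le, maxGSW_comm g μ ν, ?_, ?_⟩,
    fun μ₁ μ₂ μ₃ _ _ _ _ _ _ => maxGSW_triangle hp g μ₁ μ₂ μ₃⟩
  · exact fun h => hinj μ ν hμ hν (map_eq_of_maxGSW_eq_zero hp₀ hg h)
  · rintro rfl
    exact maxGSW_self hp₀ hg μ

/-- If the generalized Radon transform associated with `g` is injective on probability
measures (with almost-everywhere replaced by everywhere since the parameter space carries no
measure), then the maximum generalized sliced `p`-Wasserstein distance is a metric on the set
of Borel probability measures on `ℝ^d` with finite `p`-th moment under every slice: it is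
non-negative, symmetric, satisfies the triangle inequality, and vanishes exactly on the
diagonal. -/
theorem maxGSW_metric {d : ℕ} {Θ : Type*}
    (p : ℝ) (hp : 1 ≤ p)
    (g : (Fin d → ℝ) → Θ → ℝ) (hg : ∀ θ : Θ, Measurable fun x => g x θ)
    (hinj : ∀ μ ν : Measure (Fin d → ℝ), IsProbabilityMeasure μ → IsProbabilityMeasure ν →
      (∀ θ : Θ, μ.map (fun x => g x θ) = ν.map (fun x => g x θ)) → μ = ν)
    (hfin : ∀ μ ν : Measure (Fin d → ℝ), IsProbabilityMeasure μ → IsProbabilityMeasure ν →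
      (∀ θ : Θ, ∫⁻ x, ENNReal.ofReal (|g x θ| ^ p) ∂μ < ∞) →
      (∀ θ : Θ, ∫⁻ x, ENNReal.ofReal (|g x θ| ^ p) ∂ν < ∞) →
      maxGSW p g μ ν < ∞) :
    (∀ μ ν : Measure (Fin d → ℝ), IsProbabilityMeasure μ → IsProbabilityMeasure ν →
      (∀ θ : Θ, ∫⁻ x, ENNReal.ofReal (|g x θ| ^ p) ∂μ < ∞) →
      (∀ θ : Θ, ∫⁻ x, ENNReal.ofReal (|g x θ| ^ p) ∂ν < ∞) →
      0 ≤ maxGSW p g μ ν ∧ maxGSW p g μ ν = maxGSW p g ν μ ∧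
        (maxGSW p g μ ν = 0 ↔ μ = ν)) ∧
    (∀ μ₁ μ₂ μ₃ : Measure (Fin d → ℝ),
      IsProbabilityMeasure μ₁ → IsProbabilityMeasure μ₂ → IsProbabilityMeasure μ₃ →
      (∀ θ : Θ, ∫⁻ x, ENNReal.ofReal (|g x θ| ^ p) ∂μ₁ < ∞) →
      (∀ θ : Θ, ∫⁻ x, ENNReal.ofReal (|g x θ| ^ p) ∂μ₂ < ∞) →
      (∀ θ : Θ, ∫⁻ x, ENNReal.ofReal (|g x θ| ^ p) ∂μ₃ < ∞) →
      maxGSW p g μ₁ μ₃ ≤ maxGSW p g μ₁ μ₂ + maxGSW p g μ₂ μ₃) :=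
  maxGSW_metric_general p hp g hg hinj
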